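/- arXiv:1402.2619 — 5 statements merged into one kernel-verified Lean document; each statement's English description precedes it below -/
import Mathlib

section
/- Let K be a commutative ring, and let A, B be commutative K-algebras equipped with augmentations, i.e. K-algebra homomorphisms π_A : A →ₐ[K] K and π_B : B →ₐ[K] K. Consider the K-algebra homomorphism p : A ⊗[K] B → A × B determined by p(a ⊗ b) = (π_B(b) • a, π_A(a) • b). Then: (i) the range of p is exactly the subalgebra A ×_K B := { (a,b) ∈ A × B : π_A(a) = π_B(b) } (the fibered product of A and B over K); and (ii) the kernel of p equals the range of the K-linear map (ker π_A) ⊗[K] (ker π_B) → A ⊗[K] B induced by the inclusions ker π_A ⊆ A and ker π_B ⊆ B (via a ⊗ b ↦ a ⊗ b). In particular the sequence Å ⊗ B̊ → A ⊗ B → A ×_K B is exact, where Å = ker π_A and B̊ = ker π_B. -/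
open scoped TensorProduct

/-!
Write `ā = a - πA a` and `b̄ = b - πB b`, so that `ā ∈ Å` and `b̄ ∈ B̊`. Expanding
`ā ⊗ b̄` shows that every `z : A ⊗ B` satisfies
`z ≡ (p z).1 ⊗ 1 + 1 ⊗ (p z).2 - πA (p z).1 • 1 ⊗ 1` modulo the image of `Å ⊗ B̊`.
Hence `z ∈ ker p` forces `z ∈ Å ⊗ B̊`, while `(a, b) ↦ a ⊗ 1 + 1 ⊗ b - πA a • 1 ⊗ 1`
is a section of `p` over the fibered product.
-/

namespace AugmentedAlgebra

variable {K A B : Type*} [CommRing K] [Ring A] [Ring B] [Algebra K A] [Algebra K B]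

abbrev augmentationIdeal (π : A →ₐ[K] K) : Submodule K A :=
  (RingHom.ker π.toRingHom).restrictScalars K

theorem sub_algebraMap_mem_augmentationIdeal (π : A →ₐ[K] K) (a : A) :
    a - algebraMap K A (π a) ∈ augmentationIdeal π := by
  simp [RingHom.mem_ker]

variable (πA : A →ₐ[K] K) (πB : B →ₐ[K] K)

abbrev kerTensorKerMap : augmentationIdeal πA ⊗[K] augmentationIdeal πB →ₗ[K] A ⊗[K] B :=
  TensorProduct.map (augmentationIdeal πA).subtype (augmentationIdeal πB).subtype

variable {πA πB} (p : A ⊗[K] B →ₐ[K] A × B)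
  (hp : ∀ (a : A) (b : B), p (a ⊗ₜ[K] b) = (πB b • a, πA a • b))
include hp

theorem augmentation_fst_eq_augmentation_snd (z : A ⊗[K] B) :
    πA (p z).1 = πB (p z).2 := by
  induction z using TensorProduct.induction_on with
  | zero => simp
  | tmul a b => simp [hp, mul_comm]
  | add z w hz hw => simp [hz, hw]

theorem apply_tmul_one_add_one_tmul_sub {a : A} {b : B} (hab : πA a = πB b) :
    p (a ⊗ₜ[K] 1 + 1 ⊗ₜ[K] b - πA a • (1 : A) ⊗ₜ[K] (1 : B)) = (a, b) := by
  rw [map_sub, map_add, map_smul, hp, hp, hp]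
  ext <;> simp [hab]

theorem apply_kerTensorKerMap (w : augmentationIdeal πA ⊗[K] augmentationIdeal πB) : p (kerTensorKerMap πA πB w) = 0 := by
  induction w using TensorProduct.induction_on with
  | zero => rw [map_zero, map_zero]
  | tmul a b =>
    have ha : πA a = 0 := a.2
    have hb : πB b = 0 := b.2
    rw [kerTensorKerMap, TensorProduct.map_tmul, hp, Submodule.subtype_apply,
      Submodule.subtype_apply, ha, hb, zero_smul, zero_smul, Prod.mk_zero_zero]
  | add v w hv hw => rw [map_add, map_add, hv, hw, add_zero]

theorem sub_tmul_sub_mem_range (z : A ⊗[K] B) :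
    z - (p z).1 ⊗ₜ[K] 1 - 1 ⊗ₜ[K] (p z).2 + πA (p z).1 • (1 : A) ⊗ₜ[K] (1 : B) ∈
      LinearMap.range (kerTensorKerMap πA πB) := by
  induction z using TensorProduct.induction_on with
  | zero => simp
  | tmul a b =>
    refine ⟨⟨_, sub_algebraMap_mem_augmentationIdeal πA a⟩ ⊗ₜ[K] ⟨_, sub_algebraMap_mem_augmentationIdeal πB b⟩, ?_⟩
    simp only [TensorProduct.map_tmul, Submodule.coe_subtype, hp, TensorProduct.sub_tmul,
      TensorProduct.tmul_sub, Algebra.algebraMap_eq_smul_one, TensorProduct.smul_tmul,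
      TensorProduct.tmul_smul, map_smul, smul_eq_mul, mul_comm]
    module
  | add z w hz hw =>
    convert Submodule.add_mem _ hz hw using 1
    simp only [map_add, Prod.fst_add, Prod.snd_add, TensorProduct.add_tmul,
      TensorProduct.tmul_add, add_smul]
    abel

theorem mem_range_kerTensorKerMap_of_apply_eq_zero {z : A ⊗[K] B} (hz : p z = 0) :
    z ∈ LinearMap.range (kerTensorKerMap πA πB) := by
  simpa [hz] using sub_tmul_sub_mem_range p hp z

end AugmentedAlgebra

open AugmentedAlgebra in
/-- Let `K` be a commutative ring and `A`, `B` augmented commutative `K`-algebras,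
with augmentations `πA : A →ₐ[K] K`, `πB : B →ₐ[K] K`.  Let
`p : A ⊗[K] B →ₐ[K] A × B` be the `K`-algebra homomorphism determined by
`p (a ⊗ b) = (πB b • a, πA a • b)`.  Then (i) the range of `p` is exactly the
fibered product `A ×_K B = {(a,b) | πA a = πB b}`, and (ii) the kernel of `p` is
the range of the `K`-linear map `(ker πA) ⊗[K] (ker πB) → A ⊗[K] B` induced by the
inclusions.  This is the exactness of the sequence `Å ⊗ B̊ → A ⊗ B → A ×_K B`. -/
theorem tensor_to_fiberProduct_range_and_kernel
    {K A B : Type*} [CommRing K] [CommRing A] [CommRing B]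
    [Algebra K A] [Algebra K B]
    (πA : A →ₐ[K] K) (πB : B →ₐ[K] K)
    (p : A ⊗[K] B →ₐ[K] A × B)
    (hp : ∀ (a : A) (b : B), p (a ⊗ₜ[K] b) = (πB b • a, πA a • b)) :
    (∀ x : A × B, x ∈ p.range ↔ πA x.1 = πB x.2) ∧
    (∀ z : A ⊗[K] B, z ∈ RingHom.ker p.toRingHom ↔
      z ∈ LinearMap.range (TensorProduct.map
        ((RingHom.ker πA.toRingHom).restrictScalars K).subtype
        ((RingHom.ker πB.toRingHom).restrictScalars K).subtype)) := by
  refine ⟨fun x => ⟨?_, fun hx => ⟨_, apply_tmul_one_add_one_tmul_sub p hp hx⟩⟩,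
    fun z => ⟨fun hz => ?_, ?_⟩⟩
  · rintro ⟨z, rfl⟩
    exact augmentation_fst_eq_augmentation_snd p hp z
  · exact mem_range_kerTensorKerMap_of_apply_eq_zero p hp hz
  · rintro ⟨w, rfl⟩
    exact apply_kerTensorKerMap p hp w
end

section
/- (Reconstruction of a set-theoretic manifold from local data.) Let V be a type, I an index type, and suppose given for all i, j ∈ I a subset V_ij ⊆ V and a map φ_ij : V → V such that: V_ij ⊆ V_ii for all i,j; φ_ij restricts to a bijection from V_ji onto V_ij; φ_ii is the identity on V_ii; and the cocycle relation holds where defined: for all i,j,k and every x ∈ V_kj with φ_jk(x) ∈ V_ji, one has x ∈ V_ki and φ_ij(φ_jk(x)) = φ_ik(x). Then there exist a type M, subsets U_i ⊆ M with M = ⋃_{i∈I} U_i, and bijections ψ_i : U_i → V_ii, such that for all i, j: ψ_j(U_i ∩ U_j) = V_ji and for every y ∈ V_ji, ψ_i(ψ_j⁻¹(y)) = φ_ij(y). (Concretely, M may be taken as the quotient of S = { (i,x) : x ∈ V_ii } by the relation (i,x) ∼ (j,y) ⇔ y ∈ V_ji and φ_ij(y) = x, which is an equivalence relation.) -/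
/-!
Glue the disjoint union of the chart images `Vij i i` along the transition maps: `(i, x)` and
`(j, y)` are identified when `y ∈ Vij j i` and `φ i j y = x`. The identities `φ i i = id` and the
cocycle relation make this an equivalence relation, the quotient is `M`, `U i` is the image of the
`i`-th piece, and `ψ i` transports any representative into chart `i` by the transition map.
-/

universe u v

open Set

structure SetGluingData (V : Type u) (I : Type v) where
  Vij : I → I → Set V
  φ : I → I → V → V
  mapsTo : ∀ i j, MapsTo (φ i j) (Vij j i) (Vij i j)
  map_self : ∀ i, ∀ x ∈ Vij i i, φ i i x = x
  cocycle : ∀ i j k, ∀ x ∈ Vij k j, φ j k x ∈ Vij j i →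
    x ∈ Vij k i ∧ φ i j (φ j k x) = φ i k x

namespace SetGluingData

variable {V : Type u} {I : Type v} (D : SetGluingData V I)

theorem subset_diag (i j : I) : D.Vij i j ⊆ D.Vij i i := fun x hx =>
  (D.cocycle i j i x hx (D.mapsTo j i hx)).1

def Total : Type (max u v) := {p : I × V // p.2 ∈ D.Vij p.1 p.1}

theorem rel_symm {i j : I} {x y : V} (hy : y ∈ D.Vij j j)
    (h : y ∈ D.Vij j i ∧ D.φ i j y = x) : x ∈ D.Vij i j ∧ D.φ j i x = y := by
  obtain ⟨hyji, rfl⟩ := h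
  refine ⟨D.mapsTo i j hyji, ?_⟩
  rw [(D.cocycle j i j y hyji (D.mapsTo i j hyji)).2, D.map_self j y hy]

theorem rel_trans {i j k : I} {x y z : V} (hxy : y ∈ D.Vij j i ∧ D.φ i j y = x)
    (hyz : z ∈ D.Vij k j ∧ D.φ j k z = y) : z ∈ D.Vij k i ∧ D.φ i k z = x := by
  obtain ⟨hyji, rfl⟩ := hxy
  obtain ⟨hzkj, rfl⟩ := hyz
  obtain ⟨hzki, hφ⟩ := D.cocycle i j k z hzkj hyji
  exact ⟨hzki, hφ.symm⟩

instance setoid : Setoid D.Total where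
  r a b := b.1.2 ∈ D.Vij b.1.1 a.1.1 ∧ D.φ a.1.1 b.1.1 b.1.2 = a.1.2
  iseqv := ⟨fun a => ⟨a.2, D.map_self _ _ a.2⟩, fun {_ b} => D.rel_symm b.2, D.rel_trans⟩

def Glued : Type (max u v) := Quotient D.setoid

def ι (i : I) (x : V) (hx : x ∈ D.Vij i i) : D.Glued := ⟦⟨(i, x), hx⟩⟧

theorem ι_eq_ι_iff {i j : I} {x y : V} {hx : x ∈ D.Vij i i} {hy : y ∈ D.Vij j j} :
    D.ι i x hx = D.ι j y hy ↔ y ∈ D.Vij j i ∧ D.φ i j y = x :=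
  Quotient.eq

theorem exists_ι (m : D.Glued) : ∃ i x hx, D.ι i x hx = m := by
  obtain ⟨⟨⟨i, x⟩, hx⟩, rfl⟩ := Quotient.exists_rep m
  exact ⟨i, x, hx, rfl⟩

def chartDomain (i : I) : Set D.Glued := {m | ∃ x hx, D.ι i x hx = m}

theorem ι_mem_chartDomain_iff {i j : I} {y : V} {hy : y ∈ D.Vij j j} :
    D.ι j y hy ∈ D.chartDomain i ↔ y ∈ D.Vij j i := by
  simp only [chartDomain, mem_ofPred_eq, ι_eq_ι_iff]
  constructor
  · rintro ⟨x, -, hyji, -⟩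
    exact hyji
  · intro hyji
    exact ⟨D.φ i j y, D.subset_diag i j (D.mapsTo i j hyji), hyji, rfl⟩

theorem iUnion_chartDomain : ⋃ i, D.chartDomain i = univ :=
  eq_univ_of_forall fun m =>
    let ⟨i, x, hx, hm⟩ := D.exists_ι m
    mem_iUnion.2 ⟨i, x, hx, hm⟩

/-- Junk outside `chartDomain i`, where the representative need not lie in the domain of
`φ i _`. -/
noncomputable def chart (i : I) (m : D.Glued) : V :=
  D.φ i (Quotient.out m).1.1 (Quotient.out m).1.2

theorem chart_ι {i j : I} {y : V} {hy : y ∈ D.Vij j j} (hyji : y ∈ D.Vij j i) :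
    D.chart i (D.ι j y hy) = D.φ i j y := by
  have hrel : D.setoid ⟨(j, y), hy⟩ (Quotient.out (D.ι j y hy)) :=
    Setoid.symm (Quotient.mk_out _)
  set p := Quotient.out (D.ι j y hy)
  obtain ⟨hpj, hφp⟩ : p.1.2 ∈ D.Vij p.1.1 j ∧ D.φ j p.1.1 p.1.2 = y := hrel
  have hcoc := (D.cocycle i j _ _ hpj (hφp ▸ hyji)).2
  rw [hφp] at hcoc
  exact hcoc.symm

theorem chart_ι_self {i : I} {x : V} {hx : x ∈ D.Vij i i} : D.chart i (D.ι i x hx) = x := by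
  rw [D.chart_ι hx, D.map_self i x hx]

theorem bijOn_chart (i : I) : BijOn (D.chart i) (D.chartDomain i) (D.Vij i i) := by
  refine ⟨?_, ?_, fun x hx => ⟨D.ι i x hx, ⟨x, hx, rfl⟩, D.chart_ι_self⟩⟩
  · rintro _ ⟨x, hx, rfl⟩
    rwa [D.chart_ι_self]
  · rintro _ ⟨x, hx, rfl⟩ _ ⟨x', hx', rfl⟩ h
    simp only [chart_ι_self] at h
    subst h
    rfl

theorem image_chart_inter (i j : I) :
    D.chart j '' (D.chartDomain i ∩ D.chartDomain j) = D.Vij j i := by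
  ext y
  constructor
  · rintro ⟨_, ⟨hmi, y, hy, rfl⟩, rfl⟩
    rw [D.chart_ι_self]
    exact D.ι_mem_chartDomain_iff.1 hmi
  · intro hyji
    have hy := D.subset_diag j i hyji
    exact ⟨D.ι j y hy, ⟨D.ι_mem_chartDomain_iff.2 hyji, y, hy, rfl⟩, D.chart_ι_self⟩

theorem chart_eq_φ_chart {i j : I} {m : D.Glued} (hm : m ∈ D.chartDomain i ∩ D.chartDomain j) :
    D.chart i m = D.φ i j (D.chart j m) := by
  obtain ⟨hmi, y, hy, rfl⟩ := hm
  rw [D.chart_ι (D.ι_mem_chartDomain_iff.1 hmi), D.chart_ι_self]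

end SetGluingData

theorem setTheoreticManifold_reconstruction_general
    {V : Type u} {I : Type v} (Vij : I → I → Set V) (φ : I → I → V → V)
    (hbij : ∀ i j, Set.BijOn (φ i j) (Vij j i) (Vij i j))
    (hid : ∀ i, ∀ x ∈ Vij i i, φ i i x = x)
    (hcoc : ∀ i j k, ∀ x ∈ Vij k j, φ j k x ∈ Vij j i →
      x ∈ Vij k i ∧ φ i j (φ j k x) = φ i k x) :
    ∃ (M : Type (max u v)) (U : I → Set M) (ψ : I → M → V),
      (⋃ i, U i) = Set.univ ∧
      (∀ i, Set.BijOn (ψ i) (U i) (Vij i i)) ∧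
      (∀ i j, ψ j '' (U i ∩ U j) = Vij j i) ∧
      (∀ i j, ∀ m ∈ U i ∩ U j, ψ i m = φ i j (ψ j m)) := by
  let D : SetGluingData V I := ⟨Vij, φ, fun i j => (hbij i j).mapsTo, hid, hcoc⟩
  exact ⟨D.Glued, D.chartDomain, D.chart, D.iUnion_chartDomain, D.bijOn_chart,
    D.image_chart_inter, fun _ _ _ => D.chart_eq_φ_chart⟩

/-- Reconstruction of a set-theoretic manifold from local gluing data: given a model
type `V`, an index type `I`, subsets `Vij i j ⊆ V` and maps `φ i j : V → V` such
that `Vij i j ⊆ Vij i i`, `φ i j` restricts to a bijection from `Vij j i` onto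
`Vij i j`, `φ i i` is the identity on `Vij i i`, and the cocycle relation holds
where defined, there exist a type `M`, a covering family of subsets `U i ⊆ M` and
bijections `ψ i : U i → Vij i i` with `ψ j '' (U i ∩ U j) = Vij j i` and
`ψ i ∘ (ψ j)⁻¹ = φ i j` on `Vij j i`. -/
theorem setTheoreticManifold_reconstruction
    {V : Type u} {I : Type v} (Vij : I → I → Set V) (φ : I → I → V → V)
    (hsub : ∀ i j, Vij i j ⊆ Vij i i)
    (hbij : ∀ i j, Set.BijOn (φ i j) (Vij j i) (Vij i j))
    (hid : ∀ i, ∀ x ∈ Vij i i, φ i i x = x)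
    (hcoc : ∀ i j k, ∀ x ∈ Vij k j, φ j k x ∈ Vij j i →
      x ∈ Vij k i ∧ φ i j (φ j k x) = φ i k x) :
    ∃ (M : Type (max u v)) (U : I → Set M) (ψ : I → M → V),
      (⋃ i, U i) = Set.univ ∧
      (∀ i, Set.BijOn (ψ i) (U i) (Vij i i)) ∧
      (∀ i j, ψ j '' (U i ∩ U j) = Vij j i) ∧
      (∀ i j, ∀ m ∈ U i ∩ U j, ψ i m = φ i j (ψ j m)) :=
  setTheoreticManifold_reconstruction_general Vij φ hbij hid hcoc
end

section
/- Let R be a ring (not necessarily commutative) and consider the iterated dual numbers S = DualNumber (DualNumber R). Write ι : R → S for the double inclusion r ↦ inl (inl r), ε₁ := inl ε ∈ S and ε₂ := ε ∈ S (the dual-number generators of the inner and outer extension, so ε₁² = 0 = ε₂²). For X, Y ∈ R, the elements u := 1 + ε₁·ι(X) and v := 1 + ε₂·ι(Y) are units of S, and their group commutator satisfies u·v·u⁻¹·v⁻¹ = 1 + ε₁·ε₂·ι(X·Y − Y·X). (This is the formula [ε₁X, ε₂Y]_grp = ε₁ε₂[X,Y]_alg defining the Lie bracket via the second tangent group, in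 the linear case.) -/
/-!
With `a = ε₁ X` and `b = ε₂ Y`, both `a` and `b` square to zero, so `1 + a` and `1 + b` are units
with inverses `1 - a` and `1 - b`. In the expansion of `(1 + a)(1 + b)(1 - a)(1 - b)` the linear
terms cancel, and every monomial of degree at least two other than `ab` and `ba` contains `ε₁` or
`ε₂` twice, hence vanishes because the `εᵢ` commute with `X`, `Y` and each other. What is left is
`1 + ab - ba = 1 + ε₁ε₂(XY - YX)`.
-/

open TrivSqZeroExt

section Ring

variable {A : Type*} [Ring A]

@[simps]
def Units.oneAddOfMulSelfEqZero {a : A} (ha : a * a = 0) : Aˣ where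
  val := 1 + a
  inv := 1 - a
  val_inv := by noncomm_ring; simp [ha]
  inv_val := by noncomm_ring; simp [ha]

theorem commutator_one_add_of_mul_self_eq_zero {a b : A} (ha : a * a = 0) (hb : b * b = 0)
    (haba : a * b * a = 0) (hbab : b * a * b = 0) :
    (1 + a) * (1 + b) * (1 - a) * (1 - b) = 1 + (a * b - b * a) :=
  calc (1 + a) * (1 + b) * (1 - a) * (1 - b)
      = 1 + (a * b - b * a) - a * a - b * b + a * a * b + b * a * b - a * b * a
          - a * (b * b) + a * b * a * b := by noncomm_ring
    _ = 1 + (a * b - b * a) := by simp [ha, hb, haba, hbab]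

theorem mul_mul_mul_eq_zero_of_commute {e x : A} (he : e * e = 0) (hx : Commute e x) (z : A) :
    e * x * (e * z) = 0 := by
  rw [hx.symm.mul_mul_mul_comm, he, zero_mul]

theorem commutator_one_add_mul_of_mul_self_eq_zero {e₁ e₂ x y : A} (he₁ : e₁ * e₁ = 0)
    (he₂ : e₂ * e₂ = 0) (h₁₂ : Commute e₁ e₂) (h₁x : Commute e₁ x) (h₁y : Commute e₁ y)
    (h₂x : Commute e₂ x) (h₂y : Commute e₂ y) :
    (1 + e₁ * x) * (1 + e₂ * y) * (1 - e₁ * x) * (1 - e₂ * y)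
      = 1 + e₁ * e₂ * (x * y - y * x) := by
  have hab : e₁ * x * (e₂ * y) = e₁ * e₂ * (x * y) := h₂x.symm.mul_mul_mul_comm e₁ y
  have hba : e₂ * y * (e₁ * x) = e₁ * e₂ * (y * x) := by
    rw [h₁y.symm.mul_mul_mul_comm, h₁₂.eq]
  rw [commutator_one_add_of_mul_self_eq_zero, hab, hba, mul_sub]
  · exact mul_mul_mul_eq_zero_of_commute he₁ h₁x x
  · exact mul_mul_mul_eq_zero_of_commute he₂ h₂y y
  · rw [mul_assoc, hba, mul_assoc e₁ e₂, mul_mul_mul_eq_zero_of_commute he₁ h₁x]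
  · rw [mul_assoc, hab, h₁₂.eq, mul_assoc e₂ e₁, mul_mul_mul_eq_zero_of_commute he₂ h₂y]

end Ring

namespace DualNumber

variable {R : Type*} [Semiring R]

theorem inl_eps_mul_inl_eps :
    (inl (eps : DualNumber R) * inl eps : DualNumber (DualNumber R)) = 0 := by
  rw [inl_mul_inl, eps_mul_eps, inl_zero]

theorem commute_inl_eps_inl_inl (r : R) :
    Commute (inl (eps : DualNumber R) : DualNumber (DualNumber R)) (inl (inl r)) :=
  (commute_eps_left (inl r)).map (inlHom _ _)

end DualNumber

/-- In the iterated dual numbers `S = DualNumber (DualNumber R)` over a ring `R`,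
with `ι r = inl (inl r)`, `ε₁ = inl ε` and `ε₂ = ε` (so `ε₁² = 0 = ε₂²`), the
elements `u = 1 + ε₁ ι X` and `v = 1 + ε₂ ι Y` are units and their group
commutator satisfies `u v u⁻¹ v⁻¹ = 1 + ε₁ ε₂ ι (X Y - Y X)`. -/
theorem second_tangent_group_commutator {R : Type*} [Ring R] (X Y : R) :
    ∃ u v : (DualNumber (DualNumber R))ˣ,
      (u : DualNumber (DualNumber R))
          = 1 + inl (DualNumber.eps : DualNumber R) * inl (inl X) ∧
      (v : DualNumber (DualNumber R))
          = 1 + (DualNumber.eps : DualNumber (DualNumber R)) * inl (inl Y) ∧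
      (↑(u * v * u⁻¹ * v⁻¹) : DualNumber (DualNumber R))
          = 1 + inl (DualNumber.eps : DualNumber R)
              * (DualNumber.eps : DualNumber (DualNumber R))
              * inl (inl (X * Y - Y * X)) := by
  have he₁ := DualNumber.inl_eps_mul_inl_eps (R := R)
  have he₂ := DualNumber.eps_mul_eps (R := DualNumber R)
  have h₁X := DualNumber.commute_inl_eps_inl_inl X
  have h₁Y := DualNumber.commute_inl_eps_inl_inl Y
  refine ⟨.oneAddOfMulSelfEqZero (mul_mul_mul_eq_zero_of_commute he₁ h₁X _),
    .oneAddOfMulSelfEqZero (mul_mul_mul_eq_zero_of_commute he₂ (DualNumber.commute_eps_left _) _),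
    rfl, rfl, ?_⟩
  simp only [Units.val_mul, Units.val_oneAddOfMulSelfEqZero, Units.val_inv_oneAddOfMulSelfEqZero]
  rw [commutator_one_add_mul_of_mul_self_eq_zero he₁ he₂ (DualNumber.commute_eps_right _) h₁X h₁Y
    (DualNumber.commute_eps_left _) (DualNumber.commute_eps_left _)]
  simp only [inl_sub, inl_mul_inl]
end

section
/- Let A be a ring (not necessarily commutative). Let φ : Aˣ →* MulAut (Multiplicative A) be the conjugation action, φ(u)(x) = u·x·u⁻¹ (written multiplicatively on the additive group of A). Then the map from the semidirect product (Multiplicative A) ⋊[φ] Aˣ to the unit group (DualNumber A)ˣ sending (x, u) to the unit (1 + ε·x)·inl(u) is a group isomorphism. In particular the unit group of the tangent ring DualNumber A is a semidirect product of Aˣ with the additive group (A, +), the projection (DualNumber A)ˣ → Aˣ induced by the ε = 0 projection is a split surjective group homomorphism, and its kernel {1 + εx : x ∈ A} is abelian with (1+εx)(1+εy) = 1 + ε(x+y). -/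
/-!
Reduction modulo `ε` is a ring map `A[ε] → A`, so the `A`-part `a` of a unit `a + εb` is a unit,
and the unit factors uniquely as `(1 + ε b a⁻¹) · a`. Since `ε² = 0`, the elements `1 + εx` form a
copy of `(A, +)`, and conjugating `1 + εx` by `a` gives `1 + ε a x a⁻¹`.
-/

open TrivSqZeroExt SemidirectProduct

variable {A : Type*} [Ring A]

def unitConjAut (u : Aˣ) : MulAut (Multiplicative A) where
  toFun x := Multiplicative.ofAdd (↑u * x.toAdd * ↑u⁻¹)
  invFun x := Multiplicative.ofAdd (↑u⁻¹ * x.toAdd * ↑u)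
  left_inv x := by
    simp [mul_assoc]
  right_inv x := by
    simp [mul_assoc]
  map_mul' x y := by
    simp [mul_add, add_mul]

def unitsConjHom : Aˣ →* MulAut (Multiplicative A) where
  toFun := unitConjAut
  map_one' := by
    ext x
    simp [unitConjAut]
  map_mul' u v := by
    ext x
    simp [unitConjAut, mul_assoc]

open scoped RightActions

namespace TrivSqZeroExt

variable {R M : Type*} [Semiring R] [AddCommGroup M] [Module R M] [Module Rᵐᵒᵖ M]

theorem inl_mul_inr_mul_inl (r s : R) (m : M) :
    (inl r * inr m * inl s : TrivSqZeroExt R M) = inr ((r • m) <• s) := by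
  rw [inl_mul_inr, inr_mul_inl]

variable [SMulCommClass R Rᵐᵒᵖ M]

theorem one_add_inr_mul_one_add_inr (m n : M) :
    (1 + inr m : TrivSqZeroExt R M) * (1 + inr n) = 1 + inr (m + n) := by
  rw [mul_add, add_mul, add_mul, inr_mul_inr, one_mul, mul_one, one_mul, add_zero, add_assoc,
    inr_add]

def oneAddInrHom : Multiplicative M →* (TrivSqZeroExt R M)ˣ where
  toFun m :=
    { val := 1 + inr m.toAdd
      inv := 1 + inr (-m.toAdd)
      val_inv := by rw [one_add_inr_mul_one_add_inr, add_neg_cancel, inr_zero, add_zero]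
      inv_val := by rw [one_add_inr_mul_one_add_inr, neg_add_cancel, inr_zero, add_zero] }
  map_one' := Units.ext <| by simp
  map_mul' m n := Units.ext (one_add_inr_mul_one_add_inr m.toAdd n.toAdd).symm

@[simp]
theorem coe_oneAddInrHom (m : Multiplicative M) :
    ((oneAddInrHom m : (TrivSqZeroExt R M)ˣ) : TrivSqZeroExt R M) = 1 + inr m.toAdd :=
  rfl

theorem coe_unit_eq_one_add_inr_mul_inl (w : (TrivSqZeroExt R M)ˣ) :
    (w : TrivSqZeroExt R M) =
      (1 + inr ((w : TrivSqZeroExt R M).snd <• (↑w⁻¹ : TrivSqZeroExt R M).fst)) *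
        inl (w : TrivSqZeroExt R M).fst := by
  have hfst : (↑w⁻¹ : TrivSqZeroExt R M).fst * (w : TrivSqZeroExt R M).fst = 1 := by
    rw [← fst_mul, Units.inv_mul, fst_one]
  rw [add_mul, one_mul, inr_mul_inl, smul_smul, ← MulOpposite.op_mul, hfst, MulOpposite.op_one,
    one_smul, inl_fst_add_inr_snd_eq]

variable (φ : Rˣ →* MulAut (Multiplicative M))
  (hφ : ∀ u m, (φ u m).toAdd = ((u : R) • m.toAdd) <• (↑u⁻¹ : R))

def semidirectProductToUnits : Multiplicative M ⋊[φ] Rˣ →* (TrivSqZeroExt R M)ˣ :=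
  SemidirectProduct.lift oneAddInrHom (Units.map (inlHom R M : R →* TrivSqZeroExt R M))
    fun u => MonoidHom.ext fun m => Units.ext <| by
      simp only [MonoidHom.comp_apply, MulEquiv.coe_toMonoidHom, MulAut.conj_apply,
        Units.val_mul, coe_oneAddInrHom, Units.coe_map, Units.coe_map_inv, MonoidHom.coe_coe,
        inlHom_apply, mul_add, add_mul, mul_one, inl_mul_inr_mul_inl, ← inl_mul, Units.mul_inv,
        inl_one, hφ]

theorem coe_semidirectProductToUnits (g : Multiplicative M ⋊[φ] Rˣ) :
    (semidirectProductToUnits φ hφ g : TrivSqZeroExt R M) =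
      (1 + inr g.left.toAdd) * inl (g.right : R) :=
  rfl

theorem semidirectProductToUnits_bijective :
    Function.Bijective (semidirectProductToUnits φ hφ) := by
  constructor
  · refine (injective_iff_map_eq_one _).2 fun g hg => ?_
    have hval := congrArg Units.val hg
    rw [coe_semidirectProductToUnits, Units.val_one] at hval
    have hright : g.right = 1 := Units.ext (by simpa using congrArg fst hval)
    rw [hright, Units.val_one, inl_one, mul_one] at hval
    have hleft : g.left = 1 := by simpa using congrArg snd hval
    exact SemidirectProduct.ext hleft hright
  · intro w
    refine ⟨⟨.ofAdd ((w : TrivSqZeroExt R M).snd <• (↑w⁻¹ : TrivSqZeroExt R M).fst),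
      Units.map (fstHom ℕ R M : TrivSqZeroExt R M →* R) w⟩, Units.ext ?_⟩
    exact (coe_unit_eq_one_add_inr_mul_inl w).symm

noncomputable def semidirectProductEquivUnits :
    Multiplicative M ⋊[φ] Rˣ ≃* (TrivSqZeroExt R M)ˣ :=
  .ofBijective _ (semidirectProductToUnits_bijective φ hφ)

end TrivSqZeroExt

theorem DualNumber.eps_mul_inl {R : Type*} [Semiring R] (r : R) :
    (DualNumber.eps * inl r : DualNumber R) = inr r := by
  rw [DualNumber.eps, inr_mul_inl, op_smul_eq_mul, one_mul]

theorem toAdd_unitsConjHom_apply (u : Aˣ) (x : Multiplicative A) :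
    (unitsConjHom u x).toAdd = ((u : A) • x.toAdd) <• (↑u⁻¹ : A) :=
  rfl

/-- The unit group of the tangent ring `DualNumber A` is the semidirect product of
`Aˣ` with the additive group `(A, +)` via conjugation: the map sending `(x, u)` to
the unit `(1 + ε x) · inl u` is a group isomorphism
`(Multiplicative A) ⋊[φ] Aˣ ≃* (DualNumber A)ˣ`.  Moreover the kernel
`{1 + ε x}` is abelian, with `(1 + ε x)(1 + ε y) = 1 + ε (x + y)`. -/
theorem dualNumber_units_semidirectProduct :
    (∃ e : (Multiplicative A) ⋊[(unitsConjHom : Aˣ →* MulAut (Multiplicative A))] Aˣ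
        ≃* (DualNumber A)ˣ,
      ∀ g : (Multiplicative A) ⋊[(unitsConjHom : Aˣ →* MulAut (Multiplicative A))] Aˣ,
        (↑(e g) : DualNumber A)
          = (1 + DualNumber.eps * inl (Multiplicative.toAdd g.left))
              * inl (↑g.right : A)) ∧
    (∀ x y : A,
      ((1 : DualNumber A) + DualNumber.eps * inl x)
          * (1 + DualNumber.eps * inl y)
        = 1 + DualNumber.eps * inl (x + y)) := by
  simp only [DualNumber.eps_mul_inl]
  exact ⟨⟨semidirectProductEquivUnits (R := A) (M := A) _ toAdd_unitsConjHom_apply,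
    coe_semidirectProductToUnits (R := A) (M := A) _ toAdd_unitsConjHom_apply⟩,
    one_add_inr_mul_one_add_inr⟩
end

section
/- Let K be a commutative ring, A and B commutative K-algebras with augmentations π_A : A →ₐ[K] K and π_B : B →ₐ[K] K, and let S = A ×_K B := { (a,b) ∈ A × B : π_A(a) = π_B(b) } be the fibered product subalgebra of A × B. Let V be any K-module. Consider the K-linear map Φ : V ⊗[K] S → (V ⊗[K] A) × (V ⊗[K] B) induced by the two coordinate projections S → A and S → B. Then Φ is injective, and its range is exactly the set of pairs (u, w) with π̃_A(u) = π̃_B(w), where π̃_A : V ⊗ A → V and π̃_B : V ⊗ B → V are the maps induced by π_A and π_B (composed with the canonical isomorphism V ⊗ K ≅ V). In other words, V ⊗ (A ×_K B) is canonically the fiber product of V ⊗ A and V ⊗ B over V. -/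
/-!
The fibered product `A ×_K B` is the kernel of `D : A × B → K`, `(a, b) ↦ πA a - πB b`, and `D` is
split surjective (`k ↦ (k • 1, 0)` is a section). A split short exact sequence stays split exact
after tensoring with `V`, so `V ⊗ (A ×_K B)` injects into `V ⊗ (A × B) ≅ (V ⊗ A) × (V ⊗ B)` with
image the kernel of `V ⊗ D`, which under `V ⊗ K ≅ V` is `(u, w) ↦ π̃A u - π̃B w`.
-/

open LinearMap TensorProduct

section SplitExact

variable {R N P : Type*} [CommRing R] [AddCommGroup N] [AddCommGroup P] [Module R N] [Module R P]
  (Q : Type*) [AddCommGroup Q] [Module R Q] {g : N →ₗ[R] P} {s : P →ₗ[R] N}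

theorem LinearMap.lTensor_subtype_ker_injective (hs : g ∘ₗ s = LinearMap.id) :
    Function.Injective (lTensor Q (ker g).subtype) := by
  obtain ⟨-, l, hl⟩ : Function.Surjective g ∧ ∃ l, l ∘ₗ (ker g).subtype = LinearMap.id :=
    (g.exact_subtype_ker_map.split_tfae'.out 0 1).mp
      (by exact ⟨(ker g).injective_subtype, s, hs⟩)
  exact injective_of_comp_eq_id _ (lTensor Q l) (by rw [← lTensor_comp, hl, lTensor_id])

theorem LinearMap.mem_range_lTensor_subtype_ker_iff (hs : g ∘ₗ s = LinearMap.id)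
    (x : Q ⊗[R] N) : x ∈ range (lTensor Q (ker g).subtype) ↔ lTensor Q g x = 0 :=
  (lTensor_exact Q g.exact_subtype_ker_map (surjective_of_comp_eq_id s g hs) x).symm

end SplitExact

/-- Let `K` be a commutative ring, `A`, `B` augmented commutative `K`-algebras with
augmentations `πA`, `πB`, and `S = A ×_K B = {(a,b) | πA a = πB b}` the fibered
product, viewed as a `K`-submodule of `A × B`.  For any `K`-module `V`, the
`K`-linear map `Φ : V ⊗[K] S → (V ⊗[K] A) × (V ⊗[K] B)` induced by the two
coordinate projections is injective, and its range consists exactly of the pairs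
`(u, w)` with `π̃A u = π̃B w`, where `π̃A : V ⊗ A → V` and `π̃B : V ⊗ B → V` are
induced by the augmentations (composed with `V ⊗ K ≅ V`).  In other words,
`V ⊗ (A ×_K B)` is the fiber product of `V ⊗ A` and `V ⊗ B` over `V`. -/
theorem tensor_fiberProduct_is_fiberProduct
    {K A B V : Type*} [CommRing K] [CommRing A] [CommRing B]
    [Algebra K A] [Algebra K B] [AddCommGroup V] [Module K V]
    (πA : A →ₐ[K] K) (πB : B →ₐ[K] K)
    (S : Submodule K (A × B))
    (hS : ∀ x : A × B, x ∈ S ↔ πA x.1 = πB x.2)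
    (Φ : V ⊗[K] S →ₗ[K] (V ⊗[K] A) × (V ⊗[K] B))
    (hΦ : ∀ (v : V) (s : S),
      Φ (v ⊗ₜ[K] s) = (v ⊗ₜ[K] (s : A × B).1, v ⊗ₜ[K] (s : A × B).2))
    (pA : V ⊗[K] A →ₗ[K] V) (hpA : ∀ (v : V) (a : A), pA (v ⊗ₜ[K] a) = πA a • v)
    (pB : V ⊗[K] B →ₗ[K] V) (hpB : ∀ (v : V) (b : B), pB (v ⊗ₜ[K] b) = πB b • v) :
    Function.Injective Φ ∧
    ∀ q : (V ⊗[K] A) × (V ⊗[K] B),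
      q ∈ LinearMap.range Φ ↔ pA q.1 = pB q.2 := by
  set D : A × B →ₗ[K] K := πA.toLinearMap ∘ₗ fst K A B - πB.toLinearMap ∘ₗ snd K A B
  have hD : D ∘ₗ (inl K A B ∘ₗ Algebra.linearMap K A) = LinearMap.id := by ext; simp [D]
  obtain rfl : S = ker D := by ext x; simp [hS, D, sub_eq_zero]
  set e := prodRight K K V A B
  have hΦe : Φ = e.toLinearMap ∘ₗ lTensor V (ker D).subtype := ext' fun v s => by simp [e, hΦ]
  have hpD (x : V ⊗[K] (A × B)) :
      pA (e x).1 - pB (e x).2 = TensorProduct.rid K V (lTensor V D x) := by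
    induction x using TensorProduct.induction_on with
    | zero => simp
    | tmul v x => simp [e, D, hpA, hpB]
    | add x y hx hy => simp only [map_add, ← hx, ← hy, Prod.fst_add, Prod.snd_add]; abel
  refine ⟨hΦe ▸ e.injective.comp (lTensor_subtype_ker_injective V hD), fun q => ?_⟩
  obtain ⟨x, rfl⟩ := e.surjective q
  rw [← sub_eq_zero, hpD, LinearEquiv.map_eq_zero_iff,
    ← mem_range_lTensor_subtype_ker_iff V hD, hΦe, range_comp, Submodule.mem_map_equiv,
    LinearEquiv.symm_apply_apply]
end
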